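/- In the class C obtained by closing {W_{2n+1} : n ≥ 1} under subgraphs and disjoint unions, each odd wheel W_{2n+1} is a minimal induced model of the bouquet-defining sentence φ; hence φ has infinitely many minimal induced models in C and the homomorphism preservation property fails for C, even though C is monotone, addable, and has treewidth at most 3. -/

import Mathlib

/-- The wheel graph `W n`: an `n`-cycle on `Fin n` together with an apex vertex
(the `Sum.inr` vertex) adjacent to every cycle vertex. -/
def wheel (n : ℕ) : SimpleGraph (Fin n ⊕ Unit) :=
  SimpleGraph.fromRel (fun u v =>
    match u, v with
    | Sum.inl i, Sum.inl j => ((i : ℕ) + 1) % n = (j : ℕ)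
    | Sum.inl _, Sum.inr _ => True
    | _, _ => False)

/-- The disjoint union of the wheels `W (ns i)` for `i : Fin k`. -/
def wheelSum (k : ℕ) (ns : Fin k → ℕ) :
    SimpleGraph (Σ i : Fin k, Fin (ns i) ⊕ Unit) :=
  SimpleGraph.fromRel (fun u v => ∃ h : u.1 = v.1, (wheel (ns v.1)).Adj (h ▸ u.2) v.2)

/-- Membership in the closure `C` of the odd wheels `{W (2n+1) : n ≥ 1}` under taking
subgraphs and disjoint unions: `G ∈ C` iff `G` is (isomorphic to) a subgraph of a finite
disjoint union of odd wheels. -/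
def InC {V : Type} (G : SimpleGraph V) : Prop :=
  ∃ (k : ℕ) (ns : Fin k → ℕ), (∀ i, 3 ≤ ns i ∧ Odd (ns i)) ∧
    ∃ f : V → Σ i : Fin k, Fin (ns i) ⊕ Unit, Function.Injective f ∧
      ∀ u v, G.Adj u v → (wheelSum k ns).Adj (f u) (f v)

/-- The first-order condition `φ` defining the presence of a free induced bouquet of
cycles: there is a vertex `x` of degree at least `1` such that every vertex `z ≠ x` at
distance at most `2` from `x` is adjacent to `x` and has exactly two neighbours other
than `x`. -/
def phiCond {V : Type} (G : SimpleGraph V) : Prop :=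
  ∃ x y, G.Adj x y ∧ ∀ z, z ≠ x → (G.Adj x z ∨ ∃ w, G.Adj x w ∧ G.Adj w z) →
    G.Adj x z ∧ ∃ u v, u ≠ v ∧ u ≠ x ∧ v ≠ x ∧ G.Adj z u ∧ G.Adj z v ∧
      ∀ w, G.Adj z w → w = u ∨ w = v ∨ w = x

/-- A bundled graph. -/
structure BGraph where
  V : Type
  G : SimpleGraph V

/-!
Of φ only this is used: its witness `x` has a neighbourhood inducing a graph of minimum degree at
least two. Map a model `A` injectively into a disjoint union of wheels. If `x` goes to a hub,
walking around the neighbourhood of `x` lifts the whole rim, an odd cycle; if `x` goes to a rim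
vertex, which has only three neighbours, the neighbourhood of `x` is a triangle. Either way `A`
has an odd closed walk of some length `c` inside the neighbourhood of a vertex, and no
homomorphism sends it to `W M` when `M > max c 3`: the neighbourhood of a rim vertex is
bipartite, and an odd closed walk on the rim of `W M` has to wind around it. So finitely many
models of φ in `C` cannot map to all odd wheels, although these satisfy φ. In a proper induced
subgraph of `W M` the same analysis finds the hub and the whole rim, or all of `W 3 = K₄`.
-/

open SimpleGraph Sum

section Wheel

variable {n : ℕ}

@[simp]
theorem wheel_adj_inr_inl (u : Unit) (i : Fin n) : (wheel n).Adj (inr u) (inl i) := by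
  simp [wheel]

@[simp]
theorem wheel_not_adj_inr_inr (u v : Unit) : ¬ (wheel n).Adj (inr u) (inr v) := by
  simp [wheel]

theorem wheel_adj_inr_iff (u : Unit) (w : Fin n ⊕ Unit) :
    (wheel n).Adj (inr u) w ↔ ∃ j, w = inl j := by
  rcases w with j | ⟨⟩ <;> simp

theorem wheel_adj_inl_inl_iff [NeZero n] (hn : 2 ≤ n) {i j : Fin n} :
    (wheel n).Adj (inl i) (inl j) ↔ j = i + 1 ∨ j = i - 1 := by
  have h1 : (1 : Fin n) ≠ 0 := by simp [Fin.ext_iff, Nat.mod_eq_of_lt (show 1 < n by omega)]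
  have hsucc (a b : Fin n) : ((a : ℕ) + 1) % n = b ↔ b = a + 1 := by
    rw [Fin.ext_iff, Fin.val_add, Fin.val_one', Nat.add_mod_mod, eq_comm]
  simp only [wheel, fromRel_adj, ne_eq, inl.injEq, hsucc]
  grind

theorem eq_or_eq_or_eq_of_wheel_adj_inl [NeZero n] (hn : 2 ≤ n) {i : Fin n} {w : Fin n ⊕ Unit}
    (h : (wheel n).Adj (inl i) w) : w = inr () ∨ w = inl (i + 1) ∨ w = inl (i - 1) := by
  rcases w with j | ⟨⟩
  · rcases (wheel_adj_inl_inl_iff hn).1 h with rfl | rfl <;> simp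
  · exact Or.inl rfl

theorem wheel_inl_triangle_free [NeZero n] (hn : 4 ≤ n) {a b c : Fin n}
    (hab : (wheel n).Adj (inl a) (inl b)) (hac : (wheel n).Adj (inl a) (inl c)) :
    ¬ (wheel n).Adj (inl b) (inl c) := by
  have h1 : (1 : Fin n) ≠ 0 := by simp [Fin.ext_iff, Nat.mod_eq_of_lt (show 1 < n by omega)]
  have h3 : (3 : Fin n) ≠ 0 := by simp [Fin.ext_iff, Nat.mod_eq_of_lt (show 3 < n by omega)]
  rw [wheel_adj_inl_inl_iff (by omega)] at hab hac ⊢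
  grind

open Fin.CommRing in
theorem phiCond_wheel (hn : 3 ≤ n) : phiCond (wheel n) := by
  have : NeZero n := ⟨by omega⟩
  have h2 : (2 : Fin n) ≠ 0 := by simp [Fin.ext_iff, Nat.mod_eq_of_lt (show 2 < n by omega)]
  refine ⟨inr (), inl 0, wheel_adj_inr_inl _ _, ?_⟩
  rintro (i | ⟨⟩) hi -
  · refine ⟨wheel_adj_inr_inl _ _, inl (i + 1), inl (i - 1), ?_, inl_ne_inr, inl_ne_inr,
      (wheel_adj_inl_inl_iff (by omega)).2 (Or.inl rfl),
      (wheel_adj_inl_inl_iff (by omega)).2 (Or.inr rfl), fun w hw => ?_⟩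
    · rw [Ne, inl.injEq]
      exact fun h => h2 (by linear_combination h)
    · rcases eq_or_eq_or_eq_of_wheel_adj_inl (by omega) hw with h | h | h <;> simp [h]
  · exact absurd rfl hi

end Wheel

section WheelSum

variable {k : ℕ} {ns : Fin k → ℕ}

theorem wheelSum_adj_mk {m : Fin k} {a b : Fin (ns m) ⊕ Unit} :
    (wheelSum k ns).Adj ⟨m, a⟩ ⟨m, b⟩ ↔ (wheel (ns m)).Adj a b := by
  simp only [wheelSum, fromRel_adj, ne_eq, Sigma.mk.injEq, heq_eq_eq, true_and, exists_const]
  exact ⟨fun h => h.2.elim id (·.symm), fun h => ⟨h.ne, Or.inl h⟩⟩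

theorem exists_of_wheelSum_adj {m : Fin k} {a : Fin (ns m) ⊕ Unit} {w}
    (h : (wheelSum k ns).Adj ⟨m, a⟩ w) : ∃ b, w = ⟨m, b⟩ ∧ (wheel (ns m)).Adj a b := by
  obtain ⟨m', b⟩ := w
  obtain rfl : m = m' := by
    rcases h with ⟨-, ⟨h, -⟩ | ⟨h, -⟩⟩
    exacts [h, h.symm]
  exact ⟨b, rfl, wheelSum_adj_mk.1 h⟩

end WheelSum

theorem inC_wheel {n : ℕ} (hn : 3 ≤ n) (hodd : Odd n) : InC (wheel n) := by
  refine ⟨1, fun _ => n, fun _ => ⟨hn, hodd⟩, fun a => ⟨0, a⟩, fun a b h => ?_, fun _ _ h => ?_⟩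
  · simpa using h
  · exact wheelSum_adj_mk.2 h

theorem eq_or_eq_or_eq_of_distinct {α : Type*} {a b c p q r s : α} (hp : p = a ∨ p = b ∨ p = c)
    (hq : q = a ∨ q = b ∨ q = c) (hr : r = a ∨ r = b ∨ r = c) (hpq : p ≠ q) (hpr : p ≠ r)
    (hqr : q ≠ r) (hs : s = a ∨ s = b ∨ s = c) : s = p ∨ s = q ∨ s = r := by
  grind

section Link

variable {V W : Type} {A : SimpleGraph V} {H : SimpleGraph W} {x y : V}

def LinkMinDegreeTwo (A : SimpleGraph V) (x : V) : Prop :=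
  ∀ z, A.Adj x z → ∃ u v, u ≠ v ∧ A.Adj x u ∧ A.Adj x v ∧ A.Adj z u ∧ A.Adj z v

theorem phiCond.exists_linkMinDegreeTwo (h : phiCond A) :
    ∃ x y, A.Adj x y ∧ LinkMinDegreeTwo A x := by
  obtain ⟨x, y, hxy, hx⟩ := h
  refine ⟨x, y, hxy, fun z hz => ?_⟩
  obtain ⟨-, u, v, huv, hux, hvx, hzu, hzv, -⟩ := hx z hz.ne' (Or.inl hz)
  exact ⟨u, v, huv, (hx u hux (Or.inr ⟨z, hz, hzu⟩)).1, (hx v hvx (Or.inr ⟨z, hz, hzv⟩)).1,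
    hzu, hzv⟩

def IsClosedWalkAround (A : SimpleGraph V) (x : V) {c : ℕ} [NeZero c] (g : Fin c → V) : Prop :=
  ∀ j, A.Adj x (g j) ∧ A.Adj (g j) (g (j + 1))

theorem IsClosedWalkAround.map {c : ℕ} [NeZero c] {g : Fin c → V} (f : A →g H)
    (h : IsClosedWalkAround A x g) : IsClosedWalkAround H (f x) (f ∘ g) :=
  fun j => ⟨f.map_adj (h j).1, f.map_adj (h j).2⟩

theorem isClosedWalkAround_triangle {u v : V} (hxy : A.Adj x y) (hxu : A.Adj x u)
    (hxv : A.Adj x v) (hyu : A.Adj y u) (hyv : A.Adj y v) (huv : A.Adj u v) :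
    IsClosedWalkAround A x ![y, u, v] := by
  intro j
  fin_cases j <;> simp [*, hyv.symm]

namespace LinkMinDegreeTwo

variable {f : A →g H}

theorem exists_triangle (hx : LinkMinDegreeTwo A x) (hxy : A.Adj x y)
    (hf : Function.Injective f) {a b c : W}
    (hnbr : ∀ w, H.Adj (f x) w → w = a ∨ w = b ∨ w = c) :
    ∃ u v, A.Adj x u ∧ A.Adj x v ∧ A.Adj y u ∧ A.Adj y v ∧ A.Adj u v := by
  -- `f` squeezes the neighbourhood of `x` into `{a, b, c}`, so it is `{y, u, v}`, and the two
  -- neighbours of `u` in it must be `y` and `v`.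
  obtain ⟨u, v, huv, hxu, hxv, hyu, hyv⟩ := hx y hxy
  obtain ⟨u₁, v₁, hne₁, hxu₁, hxv₁, huu₁, huv₁⟩ := hx u hxu
  have hlink : ∀ z, A.Adj x z → z = y ∨ z = u ∨ z = v := by
    have himg z (hz : A.Adj x z) := hnbr _ (f.map_adj hz)
    intro z hz
    simpa only [hf.eq_iff] using eq_or_eq_or_eq_of_distinct (himg y hxy) (himg u hxu)
      (himg v hxv) (hf.ne hyu.ne) (hf.ne hyv.ne) (hf.ne huv) (himg z hz)
  refine ⟨u, v, hxu, hxv, hyu, hyv, ?_⟩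
  rcases hlink u₁ hxu₁ with rfl | rfl | rfl <;> rcases hlink v₁ hxv₁ with rfl | rfl | rfl
  all_goals first
    | assumption
    | exact absurd rfl hne₁
    | exact absurd huu₁ A.irrefl
    | exact absurd huv₁ A.irrefl

theorem exists_adj_succ {n : ℕ} [NeZero n] (hx : LinkMinDegreeTwo A x)
    (hf : Function.Injective f) {e : Fin n → W} (hnbr : ∀ w, H.Adj (f x) w → ∃ j, w = e j)
    (hcyc : ∀ j j', H.Adj (e j) (e j') → j' = j + 1 ∨ j' = j - 1) {z : V} {j : Fin n}
    (hz : A.Adj x z) (hfz : f z = e j) : ∃ z', A.Adj x z' ∧ A.Adj z z' ∧ f z' = e (j + 1) := by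
  obtain ⟨u, v, huv, hxu, hxv, hzu, hzv⟩ := hx z hz
  obtain ⟨ju, hju⟩ := hnbr _ (f.map_adj hxu)
  obtain ⟨jv, hjv⟩ := hnbr _ (f.map_adj hxv)
  have hu := hcyc j ju (hfz ▸ hju ▸ f.map_adj hzu)
  have hv := hcyc j jv (hfz ▸ hjv ▸ f.map_adj hzv)
  have hne : ju ≠ jv := by
    rintro rfl
    exact huv (hf (hju.trans hjv.symm))
  rcases hu with rfl | rfl
  · exact ⟨u, hxu, hzu, hju⟩
  · rcases hv with rfl | rfl
    · exact ⟨v, hxv, hzv, hjv⟩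
    · exact absurd rfl hne

open Fin.NatCast in
theorem exists_cycle_lift {n : ℕ} [NeZero n] (hx : LinkMinDegreeTwo A x) (hxy : A.Adj x y)
    (hf : Function.Injective f) {e : Fin n → W} (hnbr : ∀ w, H.Adj (f x) w → ∃ j, w = e j)
    (hcyc : ∀ j j', H.Adj (e j) (e j') → j' = j + 1 ∨ j' = j - 1) :
    ∃ g : Fin n → V, IsClosedWalkAround A x g ∧ ∀ j, f (g j) = e j := by
  obtain ⟨j₀, hj₀⟩ := hnbr _ (f.map_adj hxy)
  have hreach (d : ℕ) : ∃ z, A.Adj x z ∧ f z = e (j₀ + d) := by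
    induction d with
    | zero => exact ⟨y, hxy, by simpa using hj₀⟩
    | succ d ih =>
      obtain ⟨z, hz, hfz⟩ := ih
      obtain ⟨z', hz', -, hfz'⟩ := hx.exists_adj_succ hf hnbr hcyc hz hfz
      exact ⟨z', hz', by rw [hfz', Nat.cast_succ, add_assoc]⟩
  have hcover (j : Fin n) : ∃ z, A.Adj x z ∧ f z = e j := by
    simpa using hreach (j - j₀).val
  choose g hxg hfg using hcover
  refine ⟨g, fun j => ⟨hxg j, ?_⟩, hfg⟩
  obtain ⟨z', -, hz', hfz'⟩ := hx.exists_adj_succ hf hnbr hcyc (hxg j) (hfg j)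
  rwa [hf (hfz'.trans (hfg _).symm)] at hz'

end LinkMinDegreeTwo

end Link

section CyclicSums

variable {c : ℕ} [NeZero c]

theorem Fin.sum_add_one_sub_eq_zero {G : Type*} [AddCommGroup G] (b : Fin c → G) :
    ∑ j, (b (j + 1) - b j) = 0 := by
  rw [Finset.sum_sub_distrib, sub_eq_zero]
  exact Equiv.sum_comp (Equiv.addRight 1) b

theorem even_of_alternating (col : Fin c → ZMod 2) (h : ∀ j, col (j + 1) = col j + 1) :
    Even c := by
  have := Fin.sum_add_one_sub_eq_zero col
  simp only [h, add_sub_cancel_left, Finset.sum_const, Finset.card_univ, Fintype.card_fin,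
    nsmul_eq_mul, mul_one] at this
  exact (ZMod.natCast_eq_zero_iff_even).1 this

theorem le_of_odd_closed_walk_in_zmod {M : ℕ} (b : Fin c → ZMod M)
    (h : ∀ j, b (j + 1) = b j + 1 ∨ b (j + 1) = b j - 1) (hc : Odd c) : M ≤ c := by
  -- Lift the steps to `s j = ±1` in `ℤ`: their sum is divisible by `M`, odd, and at most `c`
  -- in absolute value.
  have hstep (j : Fin c) : ∃ s : ℤ, |s| = 1 ∧ b (j + 1) = b j + s := by
    rcases h j with h | h
    · exact ⟨1, by simp, by simp [h]⟩
    · exact ⟨-1, by simp, by simp [h, sub_eq_add_neg]⟩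
  choose s hs hbs using hstep
  have hdvd : (M : ℤ) ∣ ∑ j, s j := by
    rw [← ZMod.intCast_zmod_eq_zero_iff_dvd, Int.cast_sum, ← Fin.sum_add_one_sub_eq_zero b]
    simp [hbs]
  have hpar : Even (∑ j, s j - c) := by
    have hsub : ∑ j, s j - c = ∑ j, (s j - 1) := by simp [Finset.sum_sub_distrib]
    rw [hsub]
    refine Finset.even_sum _ fun j _ => ?_
    rcases (abs_eq zero_le_one).1 (hs j) with h | h <;> simp [h]
  have hne : ∑ j, s j ≠ 0 := by
    intro h0
    rw [h0, zero_sub, even_neg] at hpar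
    exact (Nat.not_even_iff_odd.2 hc) (by exact_mod_cast hpar)
  have habs : |∑ j, s j| ≤ c := by
    calc |∑ j, s j| ≤ ∑ j, |s j| := Finset.abs_sum_le_sum_abs _ _
      _ = c := by simp [hs]
  exact_mod_cast (Int.le_of_dvd (abs_pos.2 hne) ((dvd_abs _ _).2 hdvd)).trans habs

end CyclicSums

theorem wheel_not_isClosedWalkAround {M c : ℕ} [NeZero c] (hM : 4 ≤ M) (hc : Odd c)
    (hcM : c < M) (t : Fin M ⊕ Unit) (g : Fin c → Fin M ⊕ Unit) :
    ¬ IsClosedWalkAround (wheel M) t g := by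
  have : NeZero M := ⟨by omega⟩
  intro hg
  rcases t with i | ⟨⟩
  · let col : Fin M ⊕ Unit → ZMod 2 := Sum.elim (fun _ => 1) (fun _ => 0)
    have hcol : ∀ p q, (wheel M).Adj (inl i) p → (wheel M).Adj (inl i) q →
        (wheel M).Adj p q → col q = col p + 1 := by
      rintro (p | ⟨⟩) (q | ⟨⟩) hp hq hpq
      · exact absurd hpq (wheel_inl_triangle_free hM hp hq)
      · rfl
      · rfl
      · exact absurd hpq (wheel_not_adj_inr_inr _ _)
    exact Nat.not_even_iff_odd.2 hc <| even_of_alternating (col ∘ g) fun j =>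
      hcol _ _ (hg j).1 (hg (j + 1)).1 (hg j).2
  · choose a ha using fun j => (wheel_adj_inr_iff _ _).1 (hg j).1
    refine hcM.not_ge (le_of_odd_closed_walk_in_zmod (ZMod.finEquiv M ∘ a) (fun j => ?_) hc)
    have hadj := (hg j).2
    rw [ha, ha, wheel_adj_inl_inl_iff (by omega)] at hadj
    rcases hadj with h | h <;> simp [h]

section Models

variable {V : Type} {A : SimpleGraph V}

theorem InC.exists_odd_isClosedWalkAround (hC : InC A) (hφ : phiCond A) :
    ∃ (c : ℕ) (_ : NeZero c), Odd c ∧ ∃ (x : V) (g : Fin c → V), IsClosedWalkAround A x g := by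
  obtain ⟨k, ns, hns, f, hf, hadj⟩ := hC
  let F : A →g wheelSum k ns := ⟨f, hadj _ _⟩
  obtain ⟨x, y, hxy, hx⟩ := hφ.exists_linkMinDegreeTwo
  rcases hfx : F x with ⟨m, i | _⟩
  all_goals have h3 := (hns m).1; have : NeZero (ns m) := ⟨by omega⟩
  · have hnbr (w) (hw : (wheelSum k ns).Adj (F x) w) :
        w = ⟨m, inr ()⟩ ∨ w = ⟨m, inl (i + 1)⟩ ∨ w = ⟨m, inl (i - 1)⟩ := by
      obtain ⟨b, rfl, hb⟩ := exists_of_wheelSum_adj (hfx ▸ hw)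
      rcases eq_or_eq_or_eq_of_wheel_adj_inl (by omega) hb with rfl | rfl | rfl <;> simp
    obtain ⟨u, v, hxu, hxv, hyu, hyv, huv⟩ := hx.exists_triangle hxy hf hnbr
    exact ⟨3, inferInstance, by decide, x, _, isClosedWalkAround_triangle hxy hxu hxv hyu hyv huv⟩
  · have hnbr (w) (hw : (wheelSum k ns).Adj (F x) w) : ∃ j, w = ⟨m, inl j⟩ := by
      obtain ⟨b, rfl, hb⟩ := exists_of_wheelSum_adj (hfx ▸ hw)
      obtain ⟨j, rfl⟩ := (wheel_adj_inr_iff _ _).1 hb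
      exact ⟨j, rfl⟩
    have hcyc (j j' : Fin (ns m)) (h : (wheelSum k ns).Adj ⟨m, inl j⟩ ⟨m, inl j'⟩) :
        j' = j + 1 ∨ j' = j - 1 :=
      (wheel_adj_inl_inl_iff (by omega)).1 (wheelSum_adj_mk.1 h)
    obtain ⟨g, hg, -⟩ := hx.exists_cycle_lift hxy hf hnbr hcyc
    exact ⟨ns m, inferInstance, (hns m).2, x, g, hg⟩

theorem InC.exists_isEmpty_hom_wheel (hC : InC A) (hφ : phiCond A) :
    ∃ N, ∀ M, N ≤ M → IsEmpty (A →g wheel M) := by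
  obtain ⟨c, _, hc, x, g, hg⟩ := hC.exists_odd_isClosedWalkAround hφ
  exact ⟨c + 4, fun M hM =>
    ⟨fun h => wheel_not_isClosedWalkAround (by omega) hc (by omega) _ _ (hg.map h)⟩⟩

end Models

theorem wheel_induce_not_phiCond {M : ℕ} (hM : 3 ≤ M) {S : Set (Fin M ⊕ Unit)}
    (hS : S ≠ Set.univ) : ¬ phiCond ((wheel M).induce S) := by
  have : NeZero M := ⟨by omega⟩
  intro hφ
  obtain ⟨x, y, hxy, hx⟩ := hφ.exists_linkMinDegreeTwo
  let f := (Embedding.induce (G := wheel M) S).toHom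
  have hf : Function.Injective f := Subtype.val_injective
  apply hS
  rw [Set.eq_univ_iff_forall]
  rcases hx₀ : x.val with i | _
  · have hnbr (w) (hw : (wheel M).Adj (f x) w) :
        w = inr () ∨ w = inl (i + 1) ∨ w = inl (i - 1) :=
      eq_or_eq_or_eq_of_wheel_adj_inl (by omega) (hx₀ ▸ hw)
    obtain ⟨u, v, hxu, hxv, hyu, hyv, huv⟩ := hx.exists_triangle hxy hf hnbr
    obtain rfl : M = 3 := by
      by_contra hM3
      exact wheel_not_isClosedWalkAround (by omega) (by decide) (by omega) _ _
        ((isClosedWalkAround_triangle hxy hxu hxv hyu hyv huv).map f)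
    -- `W 3` has only the four vertices `x, y, u, v`
    intro w
    by_contra hw
    have hnodup : [w, x.val, y.val, u.val, v.val].Nodup := by
      have hwS (z : S) : w ≠ z.val := fun h => hw (h ▸ z.2)
      simp [hwS, Subtype.val_injective.ne, hxy.ne, hxu.ne, hxv.ne, hyu.ne, hyv.ne, huv.ne]
    simpa using hnodup.length_le_card
  · have hnbr (w) (hw : (wheel M).Adj (f x) w) : ∃ j, w = inl j :=
      (wheel_adj_inr_iff _ _).1 (by rwa [← hx₀])
    have hcyc (j j' : Fin M) (h : (wheel M).Adj (inl j) (inl j')) : j' = j + 1 ∨ j' = j - 1 :=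
      (wheel_adj_inl_inl_iff (by omega)).1 h
    obtain ⟨g, -, hg⟩ := hx.exists_cycle_lift hxy hf hnbr hcyc
    rintro (j | ⟨⟩)
    · exact hg j ▸ (g j).2
    · exact hx₀ ▸ x.2

/-- In the closure `C` of the odd wheels under subgraphs and disjoint
unions (a monotone, addable class of treewidth at most 3), each odd wheel `W (2n+1)` is a
minimal induced model of `φ`: it lies in `C`, satisfies `φ`, and no proper induced
subgraph satisfies `φ`.  Hence `φ` has infinitely many minimal induced models in `C` and
homomorphism preservation fails for `C`: `φ` is not equivalent over `C` to an
existential-positive sentence, i.e. there is no finite list of structures whose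
homomorphism cones define `φ` on `C`. -/
theorem odd_wheels_minimal_models_and_hpp_fails :
    (∀ n : ℕ, 1 ≤ n →
      InC (wheel (2 * n + 1)) ∧ phiCond (wheel (2 * n + 1)) ∧
        ∀ S : Set (Fin (2 * n + 1) ⊕ Unit), S ≠ Set.univ →
          ¬ phiCond ((wheel (2 * n + 1)).induce S)) ∧
    ¬ ∃ l : List BGraph, (∀ A ∈ l, InC A.G) ∧
        ∀ (W : Type) (H : SimpleGraph W), InC H →
          (phiCond H ↔ ∃ A ∈ l, Nonempty (A.G →g H)) := by
  refine ⟨fun n hn => ⟨inC_wheel (by omega) (odd_two_mul_add_one n), phiCond_wheel (by omega),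
    fun S hS => wheel_induce_not_phiCond (by omega) hS⟩, ?_⟩
  rintro ⟨l, hlC, hl⟩
  have hlarge : ∀ᶠ n in Filter.atTop, 1 ≤ n ∧ ∀ A ∈ l, IsEmpty (A.G →g wheel (2 * n + 1)) := by
    refine (Filter.eventually_ge_atTop 1).and ((Filter.eventually_all_finite l.finite_toSet).2 ?_)
    intro A hA
    obtain ⟨N, hN⟩ := (hlC A hA).exists_isEmpty_hom_wheel
      ((hl _ _ (hlC A hA)).2 ⟨A, hA, ⟨SimpleGraph.Hom.id⟩⟩)
    exact Filter.eventually_atTop.2 ⟨N, fun n hn => hN _ (by omega)⟩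
  obtain ⟨n, hn, hempty⟩ := hlarge.exists
  obtain ⟨A, hA, ⟨h⟩⟩ := (hl _ _ (inC_wheel (n := 2 * n + 1) (by omega) (odd_two_mul_add_one n))).1
    (phiCond_wheel (by omega))
  exact (hempty A hA).false h
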